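/- arXiv:2207.04083 — 4 statements merged into one kernel-verified Lean document; each statement's English description precedes it below -/
import Mathlib

section
/- Let X be an n×n real matrix with XᵀX = Iₙ (orthonormal), let y ∈ ℝⁿ with y ≠ 0, and for λ ≥ 0 define L(α) = ‖y − Xα‖₂ + λ‖α‖₂ for α ∈ ℝⁿ. Then the zero vector α = 0 is a global minimizer of L if and only if λ ≥ 1. -/
/-!
The triangle inequality and `‖Xα‖₂ = ‖α‖₂` give `‖y‖₂ ≤ ‖y − Xα‖₂ + ‖α‖₂ ≤ L(α)` once `λ ≥ 1`.
Conversely, `X` is square, so `XXᵀ = Iₙ` as well and `α = Xᵀy` fits `y` exactly: it costs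
`λ‖y‖₂`, which undercuts `L(0) = ‖y‖₂ > 0` when `λ < 1`.
-/

open scoped BigOperators

/-- Euclidean norm of a vector in `ℝᵐ`. -/
noncomputable def norm2 {m : ℕ} (v : Fin m → ℝ) : ℝ := Real.sqrt (∑ i, (v i) ^ 2)

/-- The square-root group-LASSO objective with orthonormal design:
`L(α) = ‖y − Xα‖₂ + λ‖α‖₂`. -/
noncomputable def sqrtGroupLassoObj {n : ℕ} (X : Matrix (Fin n) (Fin n) ℝ)
    (y : Fin n → ℝ) (lam : ℝ) (α : Fin n → ℝ) : ℝ :=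
  norm2 (y - X.mulVec α) + lam * norm2 α

section norm2

variable {m : ℕ}

lemma norm2_eq_norm_toLp (v : Fin m → ℝ) : norm2 v = ‖WithLp.toLp 2 v‖ := by
  simp [EuclideanSpace.norm_eq, norm2]

lemma norm2_eq_sqrt_dotProduct (v : Fin m → ℝ) : norm2 v = √(v ⬝ᵥ v) := by
  simp [norm2, dotProduct, sq]

lemma norm2_nonneg (v : Fin m → ℝ) : 0 ≤ norm2 v := Real.sqrt_nonneg _

@[simp]
lemma norm2_zero : norm2 (0 : Fin m → ℝ) = 0 := by
  simp [norm2]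

lemma norm2_pos {v : Fin m → ℝ} (hv : v ≠ 0) : 0 < norm2 v := by
  rw [norm2_eq_norm_toLp, norm_pos_iff]
  exact (WithLp.toLp_eq_zero 2).not.mpr hv

lemma norm2_le_norm2_sub_add (v w : Fin m → ℝ) : norm2 v ≤ norm2 (v - w) + norm2 w := by
  simp only [norm2_eq_norm_toLp, WithLp.toLp_sub]
  exact norm_le_norm_sub_add _ _

lemma norm2_mulVec_of_transpose_mul_self {n : ℕ} {X : Matrix (Fin m) (Fin n) ℝ}
    (hX : X.transpose * X = 1) (v : Fin n → ℝ) : norm2 (X.mulVec v) = norm2 v := by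
  rw [norm2_eq_sqrt_dotProduct, norm2_eq_sqrt_dotProduct, Matrix.dotProduct_mulVec,
    Matrix.vecMul_mulVec, hX, Matrix.vecMul_one]

end norm2

section sqrtGroupLassoObj

variable {n : ℕ} {X : Matrix (Fin n) (Fin n) ℝ} (y : Fin n → ℝ) (lam : ℝ)

lemma sqrtGroupLassoObj_zero : sqrtGroupLassoObj X y lam 0 = norm2 y := by
  simp [sqrtGroupLassoObj]

lemma sqrtGroupLassoObj_transpose_mulVec (hX : X * X.transpose = 1) :
    sqrtGroupLassoObj X y lam (X.transpose.mulVec y) = lam * norm2 y := by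
  have hXt : X.transpose.transpose * X.transpose = 1 := by rwa [Matrix.transpose_transpose]
  rw [sqrtGroupLassoObj, Matrix.mulVec_mulVec, hX, Matrix.one_mulVec, sub_self, norm2_zero,
    zero_add, norm2_mulVec_of_transpose_mul_self hXt]

lemma norm2_le_sqrtGroupLassoObj (hX : X.transpose * X = 1) (hlam : 1 ≤ lam)
    (α : Fin n → ℝ) : norm2 y ≤ sqrtGroupLassoObj X y lam α :=
  calc norm2 y ≤ norm2 (y - X.mulVec α) + norm2 (X.mulVec α) := norm2_le_norm2_sub_add _ _
    _ = norm2 (y - X.mulVec α) + 1 * norm2 α := by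
      rw [norm2_mulVec_of_transpose_mul_self hX, one_mul]
    _ ≤ sqrtGroupLassoObj X y lam α := by
      unfold sqrtGroupLassoObj
      gcongr
      exact norm2_nonneg α

end sqrtGroupLassoObj

theorem zero_isMinimizer_iff_general {n : ℕ} (X : Matrix (Fin n) (Fin n) ℝ)
    (hX : X.transpose * X = 1) (y : Fin n → ℝ) (hy : y ≠ 0)
    (lam : ℝ) :
    (∀ α : Fin n → ℝ, sqrtGroupLassoObj X y lam 0 ≤ sqrtGroupLassoObj X y lam α) ↔
      1 ≤ lam := by
  refine ⟨fun hmin => ?_, fun hlam α => ?_⟩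
  · have h := hmin (X.transpose.mulVec y)
    rw [sqrtGroupLassoObj_zero, sqrtGroupLassoObj_transpose_mulVec y lam (mul_eq_one_comm.mp hX)]
      at h
    exact (le_mul_iff_one_le_left (norm2_pos hy)).mp h
  · exact (sqrtGroupLassoObj_zero y lam).trans_le (norm2_le_sqrtGroupLassoObj y lam hX hlam α)

/-- With orthonormal design `XᵀX = Iₙ` and `y ≠ 0`, the zero vector is a global
minimizer of `L(α) = ‖y − Xα‖₂ + λ‖α‖₂` if and only if `λ ≥ 1`. -/
theorem zero_isMinimizer_iff {n : ℕ} (X : Matrix (Fin n) (Fin n) ℝ)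
    (hX : X.transpose * X = 1) (y : Fin n → ℝ) (hy : y ≠ 0)
    (lam : ℝ) (hlam : 0 ≤ lam) :
    (∀ α : Fin n → ℝ, sqrtGroupLassoObj X y lam 0 ≤ sqrtGroupLassoObj X y lam α) ↔
      1 ≤ lam :=
  zero_isMinimizer_iff_general X hX y hy lam
end

section
/- Let z ∈ ℝᵐ, let λ > 0, and define G(β) = ‖z − β‖₂ + λ‖β‖₁ for β ∈ ℝᵐ. Let ‖z‖₀ = #{i : z_i ≠ 0}. Then β = z is a global minimizer of G if and only if λ·√(‖z‖₀) ≤ 1. -/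
/-!
Sufficiency: off the support of `z` the ℓ1 term can only grow, and on the support
`‖z‖₁ - ‖β‖₁ ≤ ∑_{z_i ≠ 0} |z_i - β_i| ≤ √‖z‖₀ · ‖z - β‖₂` by Cauchy–Schwarz, which `λ√‖z‖₀ ≤ 1`
lets the fidelity term `‖z - β‖₂` absorb.

Necessity: soft-thresholding `z` by a level `t > 0` below every `|z_i| ≠ 0` lowers the ℓ1 term
by `λ t ‖z‖₀` at the cost `t √‖z‖₀` in the fidelity term.
-/

open scoped BigOperators

/-- ℓ1-norm of a vector in `ℝᵐ`. -/
noncomputable def norm1 {m : ℕ} (v : Fin m → ℝ) : ℝ := ∑ i, |v i|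

/-- Number of nonzero entries of a vector in `ℝᵐ`: `‖v‖₀`. -/
noncomputable def norm0 {m : ℕ} (v : Fin m → ℝ) : ℕ := {i | v i ≠ 0}.ncard

/-- The square-root soft-waveshrink objective in the orthonormal wavelet domain:
`G(β) = ‖z − β‖₂ + λ‖β‖₁`. -/
noncomputable def srswObj {m : ℕ} (z : Fin m → ℝ) (lam : ℝ) (β : Fin m → ℝ) : ℝ :=
  norm2 (z - β) + lam * norm1 β

open Finset

theorem Finset.exists_pos_forall_le {ι : Type*} (s : Finset ι) {f : ι → ℝ}
    (hf : ∀ i ∈ s, 0 < f i) : ∃ t > 0, ∀ i ∈ s, t ≤ f i := by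
  set u := insert 1 (s.image f)
  refine ⟨u.min' (insert_nonempty _ _), ?_,
    fun i hi ↦ u.min'_le _ (mem_insert_of_mem (mem_image_of_mem f hi))⟩
  refine (lt_min'_iff _ _).2 fun y hy ↦ ?_
  simp only [u, mem_insert, mem_image] at hy
  rcases hy with rfl | ⟨i, hi, rfl⟩
  exacts [one_pos, hf i hi]

theorem exists_abs_sub_eq_and_abs_eq {α : Type*} [AddCommGroup α] [LinearOrder α]
    [IsOrderedAddMonoid α] {x t : α} (ht : 0 ≤ t) (htx : t ≤ |x|) :
    ∃ y, |x - y| = t ∧ |y| = |x| - t := by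
  rcases le_total 0 x with hx | hx
  · refine ⟨x - t, by simp [abs_of_nonneg ht], ?_⟩
    rw [abs_of_nonneg hx] at htx ⊢
    exact abs_of_nonneg (sub_nonneg.2 htx)
  · refine ⟨x + t, by simp [abs_of_nonneg ht], ?_⟩
    rw [abs_of_nonpos hx] at htx ⊢
    rw [abs_of_nonpos (by rwa [← neg_nonneg, neg_add, ← sub_eq_add_neg, sub_nonneg])]
    abel

section
variable {m : ℕ}

theorem norm0_eq_card (z : Fin m → ℝ) : norm0 z = #{i | z i ≠ 0} := by
  rw [norm0, ← Set.ncard_coe_finset, coe_filter]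
  simp

theorem sum_abs_le_sqrt_card_mul_norm2 (s : Finset (Fin m)) (v : Fin m → ℝ) :
    ∑ i ∈ s, |v i| ≤ √(#s : ℝ) * norm2 v := by
  rw [norm2, ← Real.sqrt_mul (Nat.cast_nonneg _)]
  apply Real.le_sqrt_of_sq_le
  calc (∑ i ∈ s, |v i|) ^ 2 ≤ #s * ∑ i ∈ s, |v i| ^ 2 := sq_sum_le_card_mul_sum_sq
    _ ≤ #s * ∑ i, v i ^ 2 := by
      simp only [sq_abs]
      gcongr
      exact subset_univ s

theorem norm1_sub_norm1_le_sum_support (z β : Fin m → ℝ) :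
    norm1 z - norm1 β ≤ ∑ i with z i ≠ 0, |z i - β i| := by
  rw [norm1, norm1, ← sum_sub_distrib, ← sum_filter_add_sum_filter_not univ (z · ≠ 0)]
  have h_on : ∑ i with z i ≠ 0, (|z i| - |β i|) ≤ ∑ i with z i ≠ 0, |z i - β i| :=
    sum_le_sum fun i _ ↦ abs_sub_abs_le_abs_sub _ _
  have h_off : ∑ i with ¬z i ≠ 0, (|z i| - |β i|) ≤ 0 :=
    sum_nonpos fun i hi ↦ by simp_all
  linarith

theorem norm1_sub_norm1_le_sqrt_norm0_mul_norm2 (z β : Fin m → ℝ) :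
    norm1 z - norm1 β ≤ √(norm0 z : ℝ) * norm2 (z - β) := by
  rw [norm0_eq_card]
  exact (norm1_sub_norm1_le_sum_support z β).trans (sum_abs_le_sqrt_card_mul_norm2 _ (z - β))

theorem srswObj_self (z : Fin m → ℝ) (lam : ℝ) : srswObj z lam z = lam * norm1 z := by
  simp [srswObj, norm2]

theorem srswObj_self_le {z : Fin m → ℝ} {lam : ℝ} (hlam : 0 ≤ lam)
    (h : lam * √(norm0 z : ℝ) ≤ 1) (β : Fin m → ℝ) : srswObj z lam z ≤ srswObj z lam β := by
  have hdiff := norm1_sub_norm1_le_sqrt_norm0_mul_norm2 z β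
  rw [srswObj_self, srswObj]
  calc lam * norm1 z = lam * (norm1 z - norm1 β) + lam * norm1 β := by ring
    _ ≤ lam * (√(norm0 z : ℝ) * norm2 (z - β)) + lam * norm1 β := by gcongr
    _ = lam * √(norm0 z : ℝ) * norm2 (z - β) + lam * norm1 β := by ring
    _ ≤ 1 * norm2 (z - β) + lam * norm1 β := by gcongr; exact Real.sqrt_nonneg _
    _ = norm2 (z - β) + lam * norm1 β := by rw [one_mul]

theorem exists_norm2_sub_eq_and_norm1_eq (z τ : Fin m → ℝ) (hτ : ∀ i, 0 ≤ τ i)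
    (hτz : ∀ i, τ i ≤ |z i|) :
    ∃ β, norm2 (z - β) = √(∑ i, τ i ^ 2) ∧ norm1 β = norm1 z - ∑ i, τ i := by
  choose β hβ_sub hβ_abs using fun i ↦ exists_abs_sub_eq_and_abs_eq (hτ i) (hτz i)
  refine ⟨β, ?_, ?_⟩
  · simp only [norm2, Pi.sub_apply, ← sq_abs (z _ - β _), hβ_sub]
  · simp only [norm1, hβ_abs, sum_sub_distrib]

theorem mul_sum_le_sqrt_sum_sq_of_isMinimizer {z : Fin m → ℝ} {lam : ℝ}
    (hmin : ∀ β, srswObj z lam z ≤ srswObj z lam β) (τ : Fin m → ℝ) (hτ : ∀ i, 0 ≤ τ i)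
    (hτz : ∀ i, τ i ≤ |z i|) : lam * ∑ i, τ i ≤ √(∑ i, τ i ^ 2) := by
  obtain ⟨β, h2, h1⟩ := exists_norm2_sub_eq_and_norm1_eq z τ hτ hτz
  have := hmin β
  rw [srswObj_self, srswObj, h2, h1] at this
  linarith

theorem mul_sqrt_norm0_le_one_of_isMinimizer {z : Fin m → ℝ} {lam : ℝ}
    (hmin : ∀ β, srswObj z lam z ≤ srswObj z lam β) : lam * √(norm0 z : ℝ) ≤ 1 := by
  obtain ⟨t, ht, htz⟩ := exists_pos_forall_le {i | z i ≠ 0} (f := fun i ↦ |z i|)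
    (fun i hi ↦ abs_pos.2 (mem_filter.1 hi).2)
  set τ : Fin m → ℝ := fun i ↦ if z i ≠ 0 then t else 0
  have key := mul_sum_le_sqrt_sum_sq_of_isMinimizer hmin τ
    (fun i ↦ by positivity) (fun i ↦ by by_cases hi : z i ≠ 0 <;> simp_all [τ])
  have hsum : ∑ i, τ i = t * norm0 z := by
    simp [τ, sum_ite, norm0_eq_card, mul_comm]
  have hsum_sq : ∑ i, τ i ^ 2 = t ^ 2 * norm0 z := by
    simp [τ, sum_ite, norm0_eq_card, mul_comm]
  rw [hsum, hsum_sq, Real.sqrt_mul (sq_nonneg t), Real.sqrt_sq ht.le] at key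
  rcases (Real.sqrt_nonneg (norm0 z : ℝ)).eq_or_lt with h0 | hpos
  · simp [← h0]
  · refine le_of_mul_le_mul_right ?_ (mul_pos ht hpos)
    calc lam * √(norm0 z : ℝ) * (t * √(norm0 z : ℝ)) = lam * (t * norm0 z) := by
          linear_combination lam * t * Real.mul_self_sqrt (Nat.cast_nonneg (α := ℝ) (norm0 z))
      _ ≤ t * √(norm0 z : ℝ) := key
      _ = 1 * (t * √(norm0 z : ℝ)) := (one_mul _).symm

end

/-- For `λ > 0`, `β = z` is a global minimizer of `G(β) = ‖z − β‖₂ + λ‖β‖₁`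
if and only if `λ·√(‖z‖₀) ≤ 1`. -/
theorem interpolant_isMinimizer_iff_srsw {m : ℕ} (z : Fin m → ℝ)
    (lam : ℝ) (hlam : 0 < lam) :
    (∀ β : Fin m → ℝ, srswObj z lam z ≤ srswObj z lam β) ↔
      lam * Real.sqrt (norm0 z) ≤ 1 :=
  ⟨mul_sqrt_norm0_le_one_of_isMinimizer, srswObj_self_le hlam.le⟩
end

section
/- Let z ∈ ℝᵐ, λ > 0, and suppose β ∈ ℝᵐ satisfies the fixed-point equation β = η_φ(z) componentwise with φ = λ‖z − β‖₂ > 0, where η is the soft-thresholding function. Let j = #{i : |z_i| ≤ φ} and suppose λ²·(m − j) < 1. Then φ² = λ²·(Σ_{i : |z_i| ≤ φ} z_i²) / (1 − λ²·(m − j)); equivalently, φ = λ·√( (sum of the j smallest squared entries |z|_(1)² + … + |z|_(j)²) / (1 − λ²(m − j)) ). -/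
open scoped BigOperators Classical

/-- Soft-thresholding with threshold `t`: `η_t(x) = sign(x)·max(|x| − t, 0)`. -/
noncomputable def soft (t x : ℝ) : ℝ := Real.sign x * max (|x| - t) 0

/-!
The residual `z - η_φ(z)` agrees with `z` on the entries with `|zᵢ| ≤ φ` and has modulus `φ` on
the others, so `‖z - β‖² = Σ_{|zᵢ| ≤ φ} zᵢ² + (m - j) φ²`. Substituting this into
`φ² = λ² ‖z - β‖²` leaves an equation that is linear in `φ²`.
-/

open Finset

theorem norm2_sq {m : ℕ} (v : Fin m → ℝ) : norm2 v ^ 2 = ∑ i, v i ^ 2 :=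
  Real.sq_sqrt (sum_nonneg fun i _ => sq_nonneg (v i))

theorem sq_sub_soft {t : ℝ} (ht : 0 ≤ t) (x : ℝ) :
    (x - soft t x) ^ 2 = if |x| ≤ t then x ^ 2 else t ^ 2 := by
  split_ifs with h
  · simp [soft, max_eq_right (sub_nonpos.2 h)]
  · rw [not_le] at h
    rw [soft, max_eq_left (sub_nonneg.2 h.le)]
    rcases lt_trichotomy x 0 with hx | rfl | hx
    · rw [Real.sign_of_neg hx, abs_of_neg hx]; ring
    · rw [abs_zero] at h; linarith
    · rw [Real.sign_of_pos hx, abs_of_pos hx]; ring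

theorem sum_sq_sub_soft {ι : Type*} [Fintype ι] {t : ℝ} (ht : 0 ≤ t) (z : ι → ℝ) :
    ∑ i, (z i - soft t (z i)) ^ 2 =
      ∑ i ∈ univ.filter (fun i => |z i| ≤ t), z i ^ 2 +
        ((Fintype.card ι : ℝ) - #(univ.filter fun i => |z i| ≤ t)) * t ^ 2 := by
  have hcard := card_filter_add_card_filter_not (s := univ) (fun i => |z i| ≤ t)
  rw [card_univ] at hcard
  simp only [sq_sub_soft ht, sum_ite, sum_const, nsmul_eq_mul, ← hcard]
  push_cast
  ring

theorem implicit_threshold_formula_general {m : ℕ} (z β : Fin m → ℝ) (lam φ : ℝ)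
    (hφ : φ = lam * norm2 (z - β)) (hφpos : 0 < φ)
    (hfix : ∀ i, β i = soft φ (z i))
    (j : ℕ) (hj : j = (Finset.univ.filter (fun i : Fin m => |z i| ≤ φ)).card)
    (hden : lam ^ 2 * ((m : ℝ) - (j : ℝ)) < 1) :
    φ ^ 2 =
      lam ^ 2 * (∑ i ∈ Finset.univ.filter (fun i : Fin m => |z i| ≤ φ), (z i) ^ 2) /
        (1 - lam ^ 2 * ((m : ℝ) - (j : ℝ))) := by
  have hφsq : φ ^ 2 = lam ^ 2 * (∑ i ∈ univ.filter (fun i : Fin m => |z i| ≤ φ), z i ^ 2 +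
      ((m : ℝ) - j) * φ ^ 2) :=
    calc φ ^ 2 = lam ^ 2 * norm2 (z - β) ^ 2 := by rw [hφ, mul_pow]
      _ = lam ^ 2 * ∑ i, (z i - soft φ (z i)) ^ 2 := by simp only [norm2_sq, Pi.sub_apply, hfix]
      _ = _ := by rw [sum_sq_sub_soft hφpos.le, Fintype.card_fin, ← hj]
  rw [eq_div_iff (by linarith)]
  linarith

/-- If `β` satisfies the fixed-point equation `β = η_φ(z)` with
`φ = λ‖z − β‖₂ > 0`, `j = #{i : |zᵢ| ≤ φ}` and `λ²(m − j) < 1`, then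
`φ² = λ²·(Σ_{i : |zᵢ| ≤ φ} zᵢ²) / (1 − λ²(m − j))`. -/
theorem implicit_threshold_formula {m : ℕ} (z β : Fin m → ℝ) (lam φ : ℝ)
    (hlam : 0 < lam)
    (hφ : φ = lam * norm2 (z - β)) (hφpos : 0 < φ)
    (hfix : ∀ i, β i = soft φ (z i))
    (j : ℕ) (hj : j = (Finset.univ.filter (fun i : Fin m => |z i| ≤ φ)).card)
    (hden : lam ^ 2 * ((m : ℝ) - (j : ℝ)) < 1) :
    φ ^ 2 =
      lam ^ 2 * (∑ i ∈ Finset.univ.filter (fun i : Fin m => |z i| ≤ φ), (z i) ^ 2) /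
        (1 - lam ^ 2 * ((m : ℝ) - (j : ℝ))) :=
  implicit_threshold_formula_general z β lam φ hφ hφpos hfix j hj hden
end

section
/- Fix z ∈ ℝᵐ and λ > 0, and define F(β) = η_{λ‖z−β‖₂}(z) ∈ ℝᵐ, where the soft-thresholding function η_t(x) = sign(x)·max(|x| − t, 0) is applied componentwise. Then F is Lipschitz continuous with Lipschitz constant λ√m: for all β₁, β₂ ∈ ℝᵐ, ‖F(β₁) − F(β₂)‖₂ ≤ λ√m · ‖β₁ − β₂‖₂. -/
/-!
The threshold `λ‖z − β‖₂` is `λ`-Lipschitz in `β` by the reverse triangle inequality, and for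
fixed `x` the map `t ↦ η_t(x)` is `1`-Lipschitz, since `max (|x| − t) 0` is. Hence every
coordinate of `F(β₁) − F(β₂)` is bounded by `λ‖β₁ − β₂‖₂`, and a vector of `m` such
coordinates has Euclidean norm at most `√m` times that bound.
-/

open scoped BigOperators

lemma Real.abs_sign_le_one (x : ℝ) : |Real.sign x| ≤ 1 := by
  rcases Real.sign_apply_eq x with h | h | h <;> simp [h]

lemma abs_soft_sub_soft_le (t₁ t₂ x : ℝ) : |soft t₁ x - soft t₂ x| ≤ |t₁ - t₂| :=
  calc |soft t₁ x - soft t₂ x|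
      = |Real.sign x| * |max (|x| - t₁) 0 - max (|x| - t₂) 0| := by
        rw [soft, soft, ← mul_sub, abs_mul]
    _ ≤ 1 * |(|x| - t₁) - (|x| - t₂)| := by
        gcongr ?_ * ?_
        exacts [Real.abs_sign_le_one x, abs_max_sub_max_le_abs _ _ _]
    _ = |t₁ - t₂| := by rw [one_mul, sub_sub_sub_cancel_left, abs_sub_comm]

section norm2

variable {m : ℕ}

lemma norm2_sub_eq_dist (a b : Fin m → ℝ) :
    norm2 (a - b) = dist (WithLp.toLp 2 a : EuclideanSpace ℝ (Fin m)) (WithLp.toLp 2 b) := by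
  simp [norm2, EuclideanSpace.dist_eq, Real.dist_eq, sq_abs]

lemma abs_norm2_sub_sub_norm2_sub_le (z a b : Fin m → ℝ) :
    |norm2 (z - a) - norm2 (z - b)| ≤ norm2 (a - b) := by
  simp only [norm2_sub_eq_dist, dist_comm (WithLp.toLp 2 z)]
  exact abs_dist_sub_le _ _ _

lemma norm2_le_sqrt_mul_of_abs_le {v : Fin m → ℝ} {c : ℝ} (h : ∀ i, |v i| ≤ c) :
    norm2 v ≤ Real.sqrt m * c := by
  obtain rfl | hm := Nat.eq_zero_or_pos m
  · simp [norm2]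
  have hc : 0 ≤ c := (abs_nonneg _).trans (h ⟨0, hm⟩)
  calc norm2 v ≤ Real.sqrt (∑ _i : Fin m, c ^ 2) :=
        Real.sqrt_le_sqrt <| Finset.sum_le_sum fun i _ => sq_le_sq.mpr ((h i).trans (le_abs_self c))
    _ = Real.sqrt m * c := by
        rw [Finset.sum_const, Finset.card_univ, Fintype.card_fin, nsmul_eq_mul,
          Real.sqrt_mul (Nat.cast_nonneg m), Real.sqrt_sq hc]

end norm2

/-- For fixed `z` and `λ > 0`, the map `β ↦ η_{λ‖z−β‖₂}(z)` is Lipschitz with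
constant `λ√m`. -/
theorem lipschitz_in_beta {m : ℕ} (z : Fin m → ℝ) (lam : ℝ) (hlam : 0 < lam) :
    ∀ β₁ β₂ : Fin m → ℝ,
      norm2 ((fun i => soft (lam * norm2 (z - β₁)) (z i)) -
              (fun i => soft (lam * norm2 (z - β₂)) (z i))) ≤
        lam * Real.sqrt m * norm2 (β₁ - β₂) := by
  intro β₁ β₂
  calc norm2 ((fun i => soft (lam * norm2 (z - β₁)) (z i)) -
              (fun i => soft (lam * norm2 (z - β₂)) (z i)))
      ≤ Real.sqrt m * |lam * norm2 (z - β₁) - lam * norm2 (z - β₂)| :=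
        norm2_le_sqrt_mul_of_abs_le fun i => abs_soft_sub_soft_le _ _ (z i)
    _ = Real.sqrt m * (lam * |norm2 (z - β₁) - norm2 (z - β₂)|) := by
        rw [← mul_sub, abs_mul, abs_of_pos hlam]
    _ ≤ Real.sqrt m * (lam * norm2 (β₁ - β₂)) := by
        gcongr
        exact abs_norm2_sub_sub_norm2_sub_le z β₁ β₂
    _ = lam * Real.sqrt m * norm2 (β₁ - β₂) := by ring
end
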